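/- Let (X,Σ,μ,T) be a measure-preserving system, let E ∈ Σ, let n ≥ 1, and let s ∈ {0,1}^n. Define A_n^E(s) := {x ∈ X : (1_E(x), 1_E(Tx), …, 1_E(T^{n−1}x)) = s}, and let p_n(s) be the period of s, i.e. the least k ∈ {1,…,n−1} such that s_i = s_{i+k} for all 0 ≤ i ≤ n−k−1, with p_n(s) = n if no such k exists. Then μ(A_n^E(s)) ≤ 1/p_n(s). -/

import Mathlib

/-!
If `x` and `T^[k] x` both have 01-name `s` for some `0 < k < n`, then `k` is a period of `s`.
Hence for `k` below the least period `p`, no point of `A = A_n^E(s)` returns to `A` after `k`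
steps, so `A, T⁻¹A, …, T^{-(p-1)}A` are pairwise disjoint sets of measure `μ A` and `p μ(A) ≤ 1`.
-/

open MeasureTheory Filter Set

/-- The atom `A_n^E(s)` of the join partition of the binary partition `{E, Eᶜ}`
corresponding to the 01-name `s`. -/
def cyl {X : Type*} (T : X → X) (E : Set X) (n : ℕ) (s : Fin n → Bool) : Set X :=
  {x | ∀ i : Fin n, (T^[(i : ℕ)] x ∈ E ↔ s i = true)}

/-- The period `p_n(s)` of a word `s ∈ {0,1}^n`: the least `k ∈ {1,…,n−1}` with
`s_i = s_{i+k}` for all `0 ≤ i ≤ n−k−1`, and `n` if no such `k` exists. -/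
noncomputable def wordPeriod (n : ℕ) (s : Fin n → Bool) : ℕ :=
  sInf ({k | 1 ≤ k ∧ k < n ∧ ∀ (i : ℕ) (h : i + k < n),
    s ⟨i, by omega⟩ = s ⟨i + k, h⟩} ∪ {n})

section Word

variable {n : ℕ} (s : Fin n → Bool)

def IsWordPeriod (k : ℕ) : Prop :=
  ∀ (i : ℕ) (h : i + k < n), s ⟨i, by omega⟩ = s ⟨i + k, h⟩

theorem wordPeriod_le : wordPeriod n s ≤ n :=
  Nat.sInf_le (Or.inr rfl)

theorem wordPeriod_le_of_isWordPeriod {k : ℕ} (hk : 1 ≤ k) (hkn : k < n)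
    (hper : IsWordPeriod s k) : wordPeriod n s ≤ k :=
  Nat.sInf_le (Or.inl ⟨hk, hkn, hper⟩)

end Word

section Cylinder

variable {X : Type*} {T : X → X} {E : Set X} {n : ℕ} (s : Fin n → Bool)

theorem measurableSet_cyl [MeasurableSpace X] (hT : Measurable T) (hE : MeasurableSet E) :
    MeasurableSet (cyl T E n s) := by
  rw [cyl, ofPred_forall]
  refine MeasurableSet.iInter fun i => ?_
  cases s i
  · simp only [Bool.false_eq_true, iff_false]
    exact (hT.iterate i) hE.compl
  · simp only [iff_true]
    exact (hT.iterate i) hE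

theorem isWordPeriod_of_iterate_mem_cyl {x : X} {k : ℕ} (hx : x ∈ cyl T E n s)
    (hkx : T^[k] x ∈ cyl T E n s) : IsWordPeriod s k := by
  intro i hik
  have hshift : T^[i + k] x = T^[i] (T^[k] x) := Function.iterate_add_apply T i k x
  rw [Bool.eq_iff_iff, ← hkx ⟨i, by omega⟩, ← hx ⟨i + k, hik⟩, hshift]

end Cylinder

theorem statement17_general {X : Type*} [MeasurableSpace X] (μ : Measure X)
    [IsProbabilityMeasure μ] (T : X → X) (hT : MeasurePreserving T μ μ)
    (E : Set X) (hE : MeasurableSet E)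
    (n : ℕ) (s : Fin n → Bool) :
    μ (cyl T E n s) ≤ 1 / (wordPeriod n s : ENNReal) := by
  rw [ENNReal.le_div_iff_mul_le (Or.inr one_ne_zero) (Or.inl (ENNReal.natCast_ne_top _))]
  by_contra! hlt
  rw [← measure_univ (μ := μ), mul_comm] at hlt
  obtain ⟨x, hx, k, ⟨hk, hkp⟩, hkx⟩ := hT.exists_mem_iterate_mem_of_measure_univ_lt_mul_measure
    (measurableSet_cyl s hT.measurable hE).nullMeasurableSet hlt
  have := wordPeriod_le_of_isWordPeriod s hk (hkp.trans_le (wordPeriod_le s))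
    (isWordPeriod_of_iterate_mem_cyl s hx hkx)
  omega

/-- Lemma: for a measure-preserving system `(X,μ,T)`, a measurable set `E`, `n ≥ 1` and a
word `s ∈ {0,1}^n`, one has `μ(A_n^E(s)) ≤ 1/p_n(s)`. -/
theorem statement17 {X : Type*} [MeasurableSpace X] (μ : Measure X)
    [IsProbabilityMeasure μ] (T : X → X) (hT : MeasurePreserving T μ μ)
    (E : Set X) (hE : MeasurableSet E)
    (n : ℕ) (hn : 1 ≤ n) (s : Fin n → Bool) :
    μ (cyl T E n s) ≤ 1 / (wordPeriod n s : ENNReal) :=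
  statement17_general μ T hT E hE n s
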